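/- Let Σ be a positive definite real symmetric matrix indexed by a four-part sum type α₁ ⊕ α₂ ⊕ β ⊕ δ, with the four blocks labelled A₁, A₂, B, W. If Σ_{B,A₁|W} = 0 and Σ_{B,A₂|W} = 0, then Σ_{A₂,B|(A₁,W)} = 0. -/

import Mathlib

open Matrix

/-- The partial covariance `Σ_{X,Y|Z} = Σ_{X,Y} − Σ_{X,Z} (Σ_{Z,Z})⁻¹ Σ_{Z,Y}`, for blocks
given by index maps `f, g, h` into the index type of `S`. -/
noncomputable def pcov {ι κ₁ κ₂ κ₃ : Type*} [Fintype κ₃] [DecidableEq κ₃]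
    (S : Matrix ι ι ℝ) (f : κ₁ → ι) (g : κ₂ → ι) (h : κ₃ → ι) : Matrix κ₁ κ₂ ℝ :=
  S.submatrix f g - S.submatrix f h * (S.submatrix h h)⁻¹ * S.submatrix h g

/-- A principal submatrix of a positive definite matrix along an injective map is
positive definite. -/
lemma posDef_submatrix_of_injective {m n : Type*} [Fintype m] [Fintype n]
    [DecidableEq m] [DecidableEq n] {M : Matrix n n ℝ} (hM : M.PosDef)
    {e : m → n} (he : Function.Injective e) : (M.submatrix e e).PosDef := by
  classical
  rw [posDef_iff_dotProduct_mulVec] at hM ⊢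
  refine ⟨?_, ?_⟩
  · have h := hM.1
    ext i j
    have := congrFun (congrFun h (e i)) (e j)
    simpa [Matrix.conjTranspose_apply] using this
  · intro x hx
    set y : n → ℝ := fun j => ∑ i, if e i = j then x i else 0 with hy
    have hye : ∀ i, y (e i) = x i := by
      intro i
      simp [hy, he.eq_iff]
    have hy0 : y ≠ 0 := by
      obtain ⟨i, hi⟩ := Function.ne_iff.mp hx
      intro h
      exact hi (by simpa [hye i] using congrFun h (e i))
    have hMy' : M *ᵥ y = fun j => ∑ i', M j (e i') * x i' := by
      funext j
      simp only [mulVec, dotProduct, hy, Finset.mul_sum, mul_ite, mul_zero]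
      rw [Finset.sum_comm]
      simp [Finset.sum_ite_eq]
    have key : star y ⬝ᵥ M *ᵥ y = star x ⬝ᵥ (M.submatrix e e) *ᵥ x := by
      rw [hMy']
      simp only [star_trivial, dotProduct, hy, Finset.sum_mul, ite_mul, zero_mul, mulVec,
        submatrix_apply]
      rw [Finset.sum_comm]
      simp [Finset.sum_ite_eq]
    have h := hM.2 hy0
    rwa [key] at h

/-- Matrix form of Lemma 2: for a positive definite symmetric matrix with blocks
`A₁, A₂, B, W`, if `Σ_{B,A₁|W} = 0` and `Σ_{B,A₂|W} = 0`, then `Σ_{A₂,B|(A₁,W)} = 0`. -/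
theorem stmt_5 {α₁ α₂ β δ : Type*} [Fintype α₁] [Fintype α₂] [Fintype β] [Fintype δ]
    [DecidableEq α₁] [DecidableEq α₂] [DecidableEq β] [DecidableEq δ]
    (S : Matrix (α₁ ⊕ α₂ ⊕ β ⊕ δ) (α₁ ⊕ α₂ ⊕ β ⊕ δ) ℝ)
    (hPD : S.PosDef)
    (ιA₁ : α₁ → α₁ ⊕ α₂ ⊕ β ⊕ δ) (ιA₂ : α₂ → α₁ ⊕ α₂ ⊕ β ⊕ δ)
    (ιB : β → α₁ ⊕ α₂ ⊕ β ⊕ δ) (ιW : δ → α₁ ⊕ α₂ ⊕ β ⊕ δ)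
    (hιA₁ : ιA₁ = Sum.inl) (hιA₂ : ιA₂ = Sum.inr ∘ Sum.inl)
    (hιB : ιB = Sum.inr ∘ Sum.inr ∘ Sum.inl) (hιW : ιW = Sum.inr ∘ Sum.inr ∘ Sum.inr)
    (h1 : pcov S ιB ιA₁ ιW = 0) (h2 : pcov S ιB ιA₂ ιW = 0) :
    pcov S ιA₂ ιB (Sum.elim ιA₁ ιW) = 0 := by
  classical
  have hS : Sᵀ = S := by
    have h := hPD.1
    rwa [Matrix.IsHermitian, conjTranspose_eq_transpose_of_trivial] at h
  -- injectivity facts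
  have hiW : Function.Injective ιW := by
    subst hιW; intro a b h; simpa using h
  have hiE : Function.Injective (Sum.elim ιA₁ ιW) := by
    subst hιA₁ hιW
    intro a b h
    cases a <;> cases b <;> simp_all
  -- positive definiteness / invertibility of the two conditioning blocks
  have hR : (S.submatrix ιW ιW).PosDef := posDef_submatrix_of_injective hPD hiW
  have hMpd : (S.submatrix (Sum.elim ιA₁ ιW) (Sum.elim ιA₁ ιW)).PosDef :=
    posDef_submatrix_of_injective hPD hiE
  have hRinvT : ((S.submatrix ιW ιW)⁻¹)ᵀ = (S.submatrix ιW ιW)⁻¹ := by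
    rw [transpose_nonsing_inv]
    congr 1
    rw [transpose_submatrix, hS]
  rw [pcov, sub_eq_zero] at h1 h2
  have h1' := congrArg Matrix.transpose h1
  have h2' := congrArg Matrix.transpose h2
  simp only [transpose_mul, transpose_submatrix, hS, hRinvT, Matrix.mul_assoc] at h1' h2'
  set R := S.submatrix ιW ιW with hRdef
  set M := S.submatrix (Sum.elim ιA₁ ιW) (Sum.elim ιA₁ ιW) with hMdef
  have hRdet : IsUnit R.det := hR.det_pos.ne'.isUnit
  have hMdet : IsUnit M.det := hMpd.det_pos.ne'.isUnit
  have hMblocks : M = fromBlocks (S.submatrix ιA₁ ιA₁) (S.submatrix ιA₁ ιW)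
      (S.submatrix ιW ιA₁) R := by
    ext (i | i) (j | j) <;> rfl
  have hNblocks : S.submatrix (Sum.elim ιA₁ ιW) ιB =
      fromRows (S.submatrix ιA₁ ιB) (S.submatrix ιW ιB) := by
    ext (i | i) j <;> rfl
  have hA2blocks : S.submatrix ιA₂ (Sum.elim ιA₁ ιW) =
      fromCols (S.submatrix ιA₂ ιA₁) (S.submatrix ιA₂ ιW) := by
    ext i (j | j) <;> rfl
  set X : Matrix (α₁ ⊕ δ) β ℝ := fromRows 0 (R⁻¹ * S.submatrix ιW ιB) with hXdef
  have hMX : M * X = S.submatrix (Sum.elim ιA₁ ιW) ιB := by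
    rw [hMblocks, hXdef, fromBlocks_mul_fromRows, hNblocks, Matrix.mul_zero, Matrix.mul_zero,
      zero_add, zero_add, ← h1', ← Matrix.mul_assoc, Matrix.mul_nonsing_inv R hRdet,
      Matrix.one_mul]
  have hinv : M⁻¹ * S.submatrix (Sum.elim ιA₁ ιW) ιB = X := by
    rw [← hMX, ← Matrix.mul_assoc, Matrix.nonsing_inv_mul M hMdet, Matrix.one_mul]
  rw [pcov, sub_eq_zero, Matrix.mul_assoc, hinv, hA2blocks, hXdef,
    fromCols_mul_fromRows, Matrix.mul_zero, zero_add, h2']
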